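/- arXiv:1411.0490 — 2 statements merged into one kernel-verified Lean document; each statement's English description precedes it below -/
import Mathlib

section
/- Patience: if C is a well-formed configuration and there is no configuration C' such that C ⟶_i C', then C ⟶_σ C'' for some configuration C''. -/
/- A formalization of the Calculus of Collision-prone Communicating Processes (CCCP). -/

namespace CCCP

/-- Channels are represented by natural numbers. -/
abbrev Chan : Type := ℕ

/-- A channel environment maps each channel to an exposure time and a value. -/
abbrev ChanEnv (V : Type) : Type := Chan → ℕ × V

/-- Expressions: values and (de Bruijn) data variables. -/
inductive Exp (V : Type) : Type where
  | val (v : V)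
  | var (i : ℕ)

/-- Boolean expressions: equality tests and exposure checks. -/
inductive BExp (V : Type) : Type where
  | beq (e1 e2 : Exp V)
  | exposed (c : Chan)

/-- Station code (processes).  Data variables and process (recursion) variables
are in de Bruijn style: `rcv c P Q` binds data variable 0 in `P`, and `fix P`
binds process variable 0 in `P`. -/
inductive Proc (V : Type) : Type where
  | broadcast (c : Chan) (e : Exp V) (P : Proc V)  -- c!⟨e⟩.P
  | rcv (c : Chan) (P Q : Proc V)                  -- ⌊c?(x).P⌋Q
  | sigma (P : Proc V)                             -- σ.P
  | tau (P : Proc V)                               -- τ.P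
  | sum (P Q : Proc V)                             -- P + Q
  | mtch (b : BExp V) (P Q : Proc V)               -- [b]P,Q
  | pvar (X : ℕ)                                   -- process variable
  | nil                                            -- termination
  | fix (P : Proc V)                               -- recursion

/-- System terms.  `active c P` is an active receiver c(x).P which binds data
variable 0 in `P`; `res c n v W` is the channel restriction νc:(n,v).W. -/
inductive Sys (V : Type) : Type where
  | proc (P : Proc V)
  | active (c : Chan) (P : Proc V)
  | par (W1 W2 : Sys V)
  | res (c : Chan) (n : ℕ) (v : V) (W : Sys V)

variable {V : Type}

/-- Evaluation of closed expressions. -/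
def Exp.eval : Exp V → Option V
  | .val v => some v
  | .var _ => none

def Exp.liftD : Exp V → ℕ → Exp V
  | .val v, _ => .val v
  | .var i, k => if i < k then .var i else .var (i + 1)

def Exp.substD : Exp V → ℕ → V → Exp V
  | .val w, _, _ => .val w
  | .var i, j, v => if i = j then .val v else if j < i then .var (i - 1) else .var i

def BExp.liftD : BExp V → ℕ → BExp V
  | .beq e1 e2, k => .beq (e1.liftD k) (e2.liftD k)
  | .exposed c, _ => .exposed c

def BExp.substD : BExp V → ℕ → V → BExp V
  | .beq e1 e2, j, v => .beq (e1.substD j v) (e2.substD j v)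
  | .exposed c, _, _ => .exposed c

/-- Lifting of data variables (≥ k) in a process. -/
def Proc.liftD : Proc V → ℕ → Proc V
  | .broadcast c e P, k => .broadcast c (e.liftD k) (Proc.liftD P k)
  | .rcv c P Q, k => .rcv c (Proc.liftD P (k + 1)) (Proc.liftD Q k)
  | .sigma P, k => .sigma (Proc.liftD P k)
  | .tau P, k => .tau (Proc.liftD P k)
  | .sum P Q, k => .sum (Proc.liftD P k) (Proc.liftD Q k)
  | .mtch b P Q, k => .mtch (b.liftD k) (Proc.liftD P k) (Proc.liftD Q k)
  | .pvar X, _ => .pvar X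
  | .nil, _ => .nil
  | .fix P, k => .fix (Proc.liftD P k)

/-- Substitution of a (closed) value for data variable j in a process. -/
def Proc.substD : Proc V → ℕ → V → Proc V
  | .broadcast c e P, j, v => .broadcast c (e.substD j v) (Proc.substD P j v)
  | .rcv c P Q, j, v => .rcv c (Proc.substD P (j + 1) v) (Proc.substD Q j v)
  | .sigma P, j, v => .sigma (Proc.substD P j v)
  | .tau P, j, v => .tau (Proc.substD P j v)
  | .sum P Q, j, v => .sum (Proc.substD P j v) (Proc.substD Q j v)
  | .mtch b P Q, j, v => .mtch (b.substD j v) (Proc.substD P j v) (Proc.substD Q j v)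
  | .pvar X, _, _ => .pvar X
  | .nil, _, _ => .nil
  | .fix P, j, v => .fix (Proc.substD P j v)

/-- Lifting of process variables (≥ k) in a process. -/
def Proc.liftP : Proc V → ℕ → Proc V
  | .broadcast c e P, k => .broadcast c e (Proc.liftP P k)
  | .rcv c P Q, k => .rcv c (Proc.liftP P k) (Proc.liftP Q k)
  | .sigma P, k => .sigma (Proc.liftP P k)
  | .tau P, k => .tau (Proc.liftP P k)
  | .sum P Q, k => .sum (Proc.liftP P k) (Proc.liftP Q k)
  | .mtch b P Q, k => .mtch b (Proc.liftP P k) (Proc.liftP Q k)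
  | .pvar X, k => if X < k then .pvar X else .pvar (X + 1)
  | .nil, _ => .nil
  | .fix P, k => .fix (Proc.liftP P (k + 1))

/-- Substitution of a process S for process variable j (used for unfolding fix). -/
def Proc.substP : Proc V → ℕ → Proc V → Proc V
  | .broadcast c e P, j, S => .broadcast c e (Proc.substP P j S)
  | .rcv c P Q, j, S => .rcv c (Proc.substP P j (Proc.liftD S 0)) (Proc.substP Q j S)
  | .sigma P, j, S => .sigma (Proc.substP P j S)
  | .tau P, j, S => .tau (Proc.substP P j S)
  | .sum P Q, j, S => .sum (Proc.substP P j S) (Proc.substP Q j S)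
  | .mtch b P Q, j, S => .mtch b (Proc.substP P j S) (Proc.substP Q j S)
  | .pvar X, j, S => if X = j then S else if j < X then .pvar (X - 1) else .pvar X
  | .nil, _, _ => .nil
  | .fix P, j, S => .fix (Proc.substP P (j + 1) (Proc.liftP S 0))

/-- Iterated time-delay prefix σ^n.P -/
def Proc.sigmaIter : ℕ → Proc V → Proc V
  | 0, P => P
  | n + 1, P => .sigma (Proc.sigmaIter n P)

/-- Does the process contain an unguarded receiver listening on channel c? -/
def Proc.hasRcv : Proc V → Chan → Bool
  | .broadcast _ _ _, _ => false
  | .rcv d _ _, c => d == c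
  | .sigma _, _ => false
  | .tau _, _ => false
  | .sum P Q, c => Proc.hasRcv P c || Proc.hasRcv Q c
  | .mtch _ _ _, _ => false
  | .pvar _, _ => false
  | .nil, _ => false
  | .fix P, c => Proc.hasRcv P c

/-- Does the system term contain an unguarded receiver listening on channel c? -/
def Sys.hasRcv : Sys V → Chan → Bool
  | .proc P, c => P.hasRcv c
  | .active _ _, _ => false
  | .par W1 W2, c => Sys.hasRcv W1 c || Sys.hasRcv W2 c
  | .res d _ _ W, c => if d = c then false else Sys.hasRcv W c

/-- The predicate rcv(Γ ▷ W, c): channel c is idle in Γ and W contains an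
unguarded receiver actively awaiting a message on c. -/
def Isrcv (Γ : ChanEnv V) (W : Sys V) (c : Chan) : Prop :=
  (Γ c).1 = 0 ∧ W.hasRcv c = true

/- Closedness of terms: data variables < dk and process variables < pk. -/

def Exp.closedUnder : Exp V → ℕ → Bool
  | .val _, _ => true
  | .var i, dk => decide (i < dk)

def BExp.closedUnder : BExp V → ℕ → Bool
  | .beq e1 e2, dk => e1.closedUnder dk && e2.closedUnder dk
  | .exposed _, _ => true

def Proc.closedUnder : Proc V → ℕ → ℕ → Bool
  | .broadcast _ e P, dk, pk => e.closedUnder dk && Proc.closedUnder P dk pk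
  | .rcv _ P Q, dk, pk => Proc.closedUnder P (dk + 1) pk && Proc.closedUnder Q dk pk
  | .sigma P, dk, pk => Proc.closedUnder P dk pk
  | .tau P, dk, pk => Proc.closedUnder P dk pk
  | .sum P Q, dk, pk => Proc.closedUnder P dk pk && Proc.closedUnder Q dk pk
  | .mtch b P Q, dk, pk => b.closedUnder dk && Proc.closedUnder P dk pk && Proc.closedUnder Q dk pk
  | .pvar X, _, pk => decide (X < pk)
  | .nil, _, _ => true
  | .fix P, dk, pk => Proc.closedUnder P dk (pk + 1)

def Sys.closedUnder : Sys V → ℕ → ℕ → Bool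
  | .proc P, dk, pk => P.closedUnder dk pk
  | .active _ P, dk, pk => P.closedUnder (dk + 1) pk
  | .par W1 W2, dk, pk => Sys.closedUnder W1 dk pk && Sys.closedUnder W2 dk pk
  | .res _ _ _ W, dk, pk => Sys.closedUnder W dk pk

/-- Process variable k does not occur unguarded (i.e. every occurrence of k lies
under a time-consuming construct: broadcast, receiver, σ-prefix or matching). -/
def Proc.guardedVar : Proc V → ℕ → Bool
  | .broadcast _ _ _, _ => true
  | .rcv _ _ _, _ => true
  | .sigma _, _ => true
  | .tau P, k => Proc.guardedVar P k
  | .sum P Q, k => Proc.guardedVar P k && Proc.guardedVar Q k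
  | .mtch _ _ _, _ => true
  | .pvar X, k => X != k
  | .nil, _ => true
  | .fix P, k => Proc.guardedVar P (k + 1)

/-- Every recursion fix X.P in the term has its recursion variable guarded by a
time-consuming construct. -/
def Proc.wfRec : Proc V → Bool
  | .broadcast _ _ P => Proc.wfRec P
  | .rcv _ P Q => Proc.wfRec P && Proc.wfRec Q
  | .sigma P => Proc.wfRec P
  | .tau P => Proc.wfRec P
  | .sum P Q => Proc.wfRec P && Proc.wfRec Q
  | .mtch _ P Q => Proc.wfRec P && Proc.wfRec Q
  | .pvar _ => true
  | .nil => true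
  | .fix P => Proc.wfRec P && Proc.guardedVar P 0

def Sys.wfRec : Sys V → Bool
  | .proc P => P.wfRec
  | .active _ P => P.wfRec
  | .par W1 W2 => Sys.wfRec W1 && Sys.wfRec W2
  | .res _ _ _ W => Sys.wfRec W

/-- A legal system term: closed, and all recursion variables guarded. -/
def Sys.proper (W : Sys V) : Prop :=
  W.closedUnder 0 0 = true ∧ W.wfRec = true

/- Free channel occurrences. -/

def BExp.usesChan : BExp V → Chan → Bool
  | .beq _ _, _ => false
  | .exposed d, c => d == c

def Proc.freeChan : Proc V → Chan → Bool
  | .broadcast d _ P, c => d == c || Proc.freeChan P c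
  | .rcv d P Q, c => d == c || Proc.freeChan P c || Proc.freeChan Q c
  | .sigma P, c => Proc.freeChan P c
  | .tau P, c => Proc.freeChan P c
  | .sum P Q, c => Proc.freeChan P c || Proc.freeChan Q c
  | .mtch b P Q, c => b.usesChan c || Proc.freeChan P c || Proc.freeChan Q c
  | .pvar _, _ => false
  | .nil, _ => false
  | .fix P, c => Proc.freeChan P c

def Sys.freeChan : Sys V → Chan → Bool
  | .proc P, c => P.freeChan c
  | .active d P, c => d == c || P.freeChan c
  | .par W1 W2, c => Sys.freeChan W1 c || Sys.freeChan W2 c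
  | .res d _ _ W, c => if d = c then false else Sys.freeChan W c

/-- Labels of the intensional semantics. -/
inductive Label (V : Type) : Type where
  | out (c : Chan) (v : V)    -- c!v
  | inp (c : Chan) (v : V)    -- c?v
  | tau
  | sigma

def Label.usesChan : Label V → Chan → Prop
  | .out d _, c => d = c
  | .inp d _, c => d = c
  | .tau, _ => False
  | .sigma, _ => False

/-- Updating a channel environment at channel c upon a broadcast (or input) of
value v: this models collisions. -/
def updBcast (errv : V) (δ : V → ℕ) (Γ : ChanEnv V) (c : Chan) (v : V) : ChanEnv V :=
  fun d => if d = c then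
      (if (Γ c).1 = 0 then (δ v, v) else (max (δ v) (Γ c).1, errv))
    else Γ d

/-- The channel-environment update upd_λ(Γ). -/
def updL (errv : V) (δ : V → ℕ) : Label V → ChanEnv V → ChanEnv V
  | .out c v, Γ => updBcast errv δ Γ c v
  | .inp c v, Γ => updBcast errv δ Γ c v
  | .tau, Γ => Γ
  | .sigma, Γ => fun c => ((Γ c).1 - 1, (Γ c).2)

/-- Γ[c ↦ p] -/
def updEnv (Γ : ChanEnv V) (c : Chan) (p : ℕ × V) : ChanEnv V :=
  fun d => if d = c then p else Γ d

/-- Evaluation of (closed) boolean expressions relative to a channel environment. -/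
inductive BEval (Γ : ChanEnv V) : BExp V → Bool → Prop where
  | beqT {e1 e2 : Exp V} {v : V} :
      e1.eval = some v → e2.eval = some v → BEval Γ (.beq e1 e2) true
  | beqF {e1 e2 : Exp V} {v1 v2 : V} :
      e1.eval = some v1 → e2.eval = some v2 → v1 ≠ v2 → BEval Γ (.beq e1 e2) false
  | expT {c : Chan} : 0 < (Γ c).1 → BEval Γ (.exposed c) true
  | expF {c : Chan} : (Γ c).1 = 0 → BEval Γ (.exposed c) false

/-- The intensional semantics of CCCP: Γ ▷ W --λ--> W'.
Parameters: `errv` is the error value, `δ` gives the transmission time of values. -/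
inductive Step (errv : V) (δ : V → ℕ) : ChanEnv V → Sys V → Label V → Sys V → Prop where
  -- (Snd)
  | snd {Γ : ChanEnv V} {c : Chan} {e : Exp V} {v : V} {P : Proc V} :
      e.eval = some v →
      Step errv δ Γ (.proc (.broadcast c e P)) (.out c v) (.proc (Proc.sigmaIter (δ v) P))
  -- (Rcv)
  | rcv {Γ : ChanEnv V} {c : Chan} {P Q : Proc V} {v : V} :
      (Γ c).1 = 0 →
      Step errv δ Γ (.proc (.rcv c P Q)) (.inp c v) (.active c P)
  -- (RcvIgn)
  | rcvIgn {Γ : ChanEnv V} {W : Sys V} {c : Chan} {v : V} :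
      ¬ Isrcv Γ W c →
      Step errv δ Γ W (.inp c v) W
  -- (Sync) and its symmetric counterpart
  | sync {Γ : ChanEnv V} {W1 W2 W1' W2' : Sys V} {c : Chan} {v : V} :
      Step errv δ Γ W1 (.out c v) W1' → Step errv δ Γ W2 (.inp c v) W2' →
      Step errv δ Γ (.par W1 W2) (.out c v) (.par W1' W2')
  | syncR {Γ : ChanEnv V} {W1 W2 W1' W2' : Sys V} {c : Chan} {v : V} :
      Step errv δ Γ W1 (.inp c v) W1' → Step errv δ Γ W2 (.out c v) W2' →
      Step errv δ Γ (.par W1 W2) (.out c v) (.par W1' W2')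
  -- (RcvPar)
  | rcvPar {Γ : ChanEnv V} {W1 W2 W1' W2' : Sys V} {c : Chan} {v : V} :
      Step errv δ Γ W1 (.inp c v) W1' → Step errv δ Γ W2 (.inp c v) W2' →
      Step errv δ Γ (.par W1 W2) (.inp c v) (.par W1' W2')
  -- (TimeNil)
  | timeNil {Γ : ChanEnv V} :
      Step errv δ Γ (.proc .nil) .sigma (.proc .nil)
  -- (Sleep)
  | sleep {Γ : ChanEnv V} {P : Proc V} :
      Step errv δ Γ (.proc (.sigma P)) .sigma (.proc P)
  -- (ActRcv)
  | actRcv {Γ : ChanEnv V} {c : Chan} {P : Proc V} :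
      1 < (Γ c).1 →
      Step errv δ Γ (.active c P) .sigma (.active c P)
  -- (EndRcv)
  | endRcv {Γ : ChanEnv V} {c : Chan} {P : Proc V} {w : V} :
      (Γ c).1 = 1 → (Γ c).2 = w →
      Step errv δ Γ (.active c P) .sigma (.proc (Proc.substD P 0 w))
  -- (Timeout)
  | timeout {Γ : ChanEnv V} {c : Chan} {P Q : Proc V} :
      (Γ c).1 = 0 →
      Step errv δ Γ (.proc (.rcv c P Q)) .sigma (.proc Q)
  -- (RcvLate)
  | rcvLate {Γ : ChanEnv V} {c : Chan} {P Q : Proc V} :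
      0 < (Γ c).1 →
      Step errv δ Γ (.proc (.rcv c P Q)) .tau (.active c (Proc.liftD (Proc.substD P 0 errv) 0))
  -- (Tau)
  | tauStep {Γ : ChanEnv V} {P : Proc V} :
      Step errv δ Γ (.proc (.tau P)) .tau (.proc P)
  -- (Then)
  | thenB {Γ : ChanEnv V} {b : BExp V} {P Q : Proc V} :
      BEval Γ b true →
      Step errv δ Γ (.proc (.mtch b P Q)) .tau (.proc (.sigma P))
  -- (Else)
  | elseB {Γ : ChanEnv V} {b : BExp V} {P Q : Proc V} :
      BEval Γ b false →
      Step errv δ Γ (.proc (.mtch b P Q)) .tau (.proc (.sigma Q))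
  -- (TimePar)
  | timePar {Γ : ChanEnv V} {W1 W2 W1' W2' : Sys V} :
      Step errv δ Γ W1 .sigma W1' → Step errv δ Γ W2 .sigma W2' →
      Step errv δ Γ (.par W1 W2) .sigma (.par W1' W2')
  -- (TauPar) and its symmetric counterpart
  | tauParL {Γ : ChanEnv V} {W1 W2 W1' : Sys V} :
      Step errv δ Γ W1 .tau W1' →
      Step errv δ Γ (.par W1 W2) .tau (.par W1' W2)
  | tauParR {Γ : ChanEnv V} {W1 W2 W2' : Sys V} :
      Step errv δ Γ W2 .tau W2' →
      Step errv δ Γ (.par W1 W2) .tau (.par W1 W2')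
  -- (Rec)
  | recS {Γ : ChanEnv V} {P : Proc V} {lam : Label V} {W : Sys V} :
      Step errv δ Γ (.proc (Proc.substP P 0 (.fix P))) lam W →
      Step errv δ Γ (.proc (.fix P)) lam W
  -- (Sum) and its symmetric counterpart
  | sumL {Γ : ChanEnv V} {P Q : Proc V} {lam : Label V} {W : Sys V} :
      Step errv δ Γ (.proc P) lam W → (lam = .tau ∨ ∃ c v, lam = .out c v) →
      Step errv δ Γ (.proc (.sum P Q)) lam W
  | sumR {Γ : ChanEnv V} {P Q : Proc V} {lam : Label V} {W : Sys V} :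
      Step errv δ Γ (.proc Q) lam W → (lam = .tau ∨ ∃ c v, lam = .out c v) →
      Step errv δ Γ (.proc (.sum P Q)) lam W
  -- (SumTime)
  | sumTime {Γ : ChanEnv V} {P Q P' Q' : Proc V} :
      Step errv δ Γ (.proc P) .sigma (.proc P') → Step errv δ Γ (.proc Q) .sigma (.proc Q') →
      Step errv δ Γ (.proc (.sum P Q)) .sigma (.proc (.sum P' Q'))
  -- (SumRcv) and its symmetric counterpart
  | sumRcvL {Γ : ChanEnv V} {P Q : Proc V} {c : Chan} {v : V} {W : Sys V} :
      Step errv δ Γ (.proc P) (.inp c v) W → Isrcv Γ (.proc P) c →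
      Step errv δ Γ (.proc (.sum P Q)) (.inp c v) W
  | sumRcvR {Γ : ChanEnv V} {P Q : Proc V} {c : Chan} {v : V} {W : Sys V} :
      Step errv δ Γ (.proc Q) (.inp c v) W → Isrcv Γ (.proc Q) c →
      Step errv δ Γ (.proc (.sum P Q)) (.inp c v) W
  -- (ResI)
  | resI {Γ : ChanEnv V} {c : Chan} {n : ℕ} {v w : V} {W W' : Sys V} :
      Step errv δ (updEnv Γ c (n, v)) W (.out c w) W' →
      Step errv δ Γ (.res c n v W) .tau
        (.res c (updBcast errv δ (updEnv Γ c (n, v)) c w c).1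
                (updBcast errv δ (updEnv Γ c (n, v)) c w c).2 W')
  -- (ResV)
  | resV {Γ : ChanEnv V} {c : Chan} {n : ℕ} {v : V} {W W' : Sys V} {lam : Label V} :
      Step errv δ (updEnv Γ c (n, v)) W lam W' →
      ¬ lam.usesChan c → lam ≠ .sigma →
      Step errv δ Γ (.res c n v W) lam (.res c n v W')
  -- time passage under restriction
  | resT {Γ : ChanEnv V} {c : Chan} {n : ℕ} {v : V} {W W' : Sys V} :
      Step errv δ (updEnv Γ c (n, v)) W .sigma W' →
      Step errv δ Γ (.res c n v W) .sigma (.res c (n - 1) v W')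

/-- Configurations. -/
abbrev Config (V : Type) : Type := ChanEnv V × Sys V

/-- Instantaneous reductions (broadcast or internal step). -/
def RedI (errv : V) (δ : V → ℕ) (C C' : Config V) : Prop :=
  (Step errv δ C.1 C.2 .tau C'.2 ∧ C'.1 = C.1) ∨
  (∃ c v, Step errv δ C.1 C.2 (.out c v) C'.2 ∧ C'.1 = updBcast errv δ C.1 c v)

/-- Timed reductions. -/
def RedT (errv : V) (δ : V → ℕ) (C C' : Config V) : Prop :=
  Step errv δ C.1 C.2 .sigma C'.2 ∧ C'.1 = updL errv δ .sigma C.1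

/-- Reductions of configurations. -/
def Red (errv : V) (δ : V → ℕ) (C C' : Config V) : Prop :=
  RedI errv δ C C' ∨ RedT errv δ C C'

def RedStar (errv : V) (δ : V → ℕ) : Config V → Config V → Prop :=
  Relation.ReflTransGen (Red errv δ)

def RedIStar (errv : V) (δ : V → ℕ) : Config V → Config V → Prop :=
  Relation.ReflTransGen (RedI errv δ)

/-- Iteration of a relation a fixed number of times. -/
def relPow {α : Type _} (r : α → α → Prop) : ℕ → α → α → Prop
  | 0 => Eq
  | n + 1 => fun a c => ∃ b, r a b ∧ relPow r n b c

/-- Strong barb: channel c is exposed. -/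
def Barb (C : Config V) (c : Chan) : Prop := 0 < (C.1 c).1

/-- Weak barb. -/
def WBarb (errv : V) (δ : V → ℕ) (C : Config V) (c : Chan) : Prop :=
  ∃ C', RedStar errv δ C C' ∧ Barb C' c

/-- Extensional actions. -/
inductive Act (V : Type) : Type where
  | inp (c : Chan) (v : V)     -- c?v
  | time                       -- σ
  | tauA                       -- τ
  | deliver (c : Chan) (v : V) -- γ(c,v)
  | idle (c : Chan)            -- ι(c)

/-- The extensional LTS over configurations. -/
inductive EStep (errv : V) (δ : V → ℕ) : Config V → Act V → Config V → Prop where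
  | einp {Γ : ChanEnv V} {W W' : Sys V} {c : Chan} {v : V} :
      Step errv δ Γ W (.inp c v) W' →
      EStep errv δ (Γ, W) (.inp c v) (updBcast errv δ Γ c v, W')
  | etime {Γ : ChanEnv V} {W W' : Sys V} :
      Step errv δ Γ W .sigma W' →
      EStep errv δ (Γ, W) .time (updL errv δ .sigma Γ, W')
  | eshh {Γ : ChanEnv V} {W W' : Sys V} {c : Chan} {v : V} :
      Step errv δ Γ W (.out c v) W' →
      EStep errv δ (Γ, W) .tauA (updBcast errv δ Γ c v, W')
  | etau {Γ : ChanEnv V} {W W' : Sys V} :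
      Step errv δ Γ W .tau W' →
      EStep errv δ (Γ, W) .tauA (Γ, W')
  | edeliver {Γ : ChanEnv V} {W W' : Sys V} {c : Chan} {v : V} :
      Γ c = (1, v) → Step errv δ Γ W .sigma W' →
      EStep errv δ (Γ, W) (.deliver c v) (updL errv δ .sigma Γ, W')
  | eidle {Γ : ChanEnv V} {W : Sys V} {c : Chan} :
      (Γ c).1 = 0 →
      EStep errv δ (Γ, W) (.idle c) (Γ, W)

/-- Weak internal moves ⟹. -/
def TauStar (errv : V) (δ : V → ℕ) : Config V → Config V → Prop :=
  Relation.ReflTransGen (fun C C' => EStep errv δ C .tauA C')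

/-- Weak extensional action C ⟹α⟹ C'. -/
def WStep (errv : V) (δ : V → ℕ) (C : Config V) (α : Act V) (C' : Config V) : Prop :=
  ∃ C1 C2, TauStar errv δ C C1 ∧ EStep errv δ C1 α C2 ∧ TauStar errv δ C2 C'

/-- C ⟹α̂⟹ C'. -/
def WHat (errv : V) (δ : V → ℕ) (C : Config V) (α : Act V) (C' : Config V) : Prop :=
  match α with
  | .tauA => TauStar errv δ C C'
  | _ => WStep errv δ C α C'

/-- (Weak) bisimulations on the extensional LTS. -/
def IsBisim (errv : V) (δ : V → ℕ) (R : Config V → Config V → Prop) : Prop :=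
  Symmetric R ∧
  ∀ C1 C2, R C1 C2 → ∀ (α : Act V) C1', EStep errv δ C1 α C1' →
    ∃ C2', WHat errv δ C2 α C2' ∧ R C1' C2'

/-- Weak bisimilarity ≈. -/
def Bisim (errv : V) (δ : V → ℕ) (C1 C2 : Config V) : Prop :=
  ∃ R, IsBisim errv δ R ∧ R C1 C2

/-- Barb-preserving relations. -/
def BarbPreserving (errv : V) (δ : V → ℕ) (R : Config V → Config V → Prop) : Prop :=
  ∀ C1 C2, R C1 C2 → ∀ c, WBarb errv δ C1 c → WBarb errv δ C2 c

/-- Reduction-closed relations. -/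
def ReductionClosed (errv : V) (δ : V → ℕ) (R : Config V → Config V → Prop) : Prop :=
  ∀ C1 C2, R C1 C2 → ∀ C1', Red errv δ C1 C1' →
    ∃ C2', RedStar errv δ C2 C2' ∧ R C1' C2'

/-- Contextual relations. -/
def Contextual (R : Config V → Config V → Prop) : Prop :=
  ∀ Γ1 W1 Γ2 W2, R (Γ1, W1) (Γ2, W2) →
    ∀ W : Sys V, W.proper → R (Γ1, .par W1 W) (Γ2, .par W2 W)

/-- Reduction barbed congruence ≃: the largest symmetric, barb-preserving,
reduction-closed and contextual relation. -/
def RBC (errv : V) (δ : V → ℕ) (C1 C2 : Config V) : Prop :=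
  ∃ R, Symmetric R ∧ BarbPreserving errv δ R ∧ ReductionClosed errv δ R ∧
    Contextual R ∧ R C1 C2

/-- Well-formed configurations. -/
inductive WF : ChanEnv V → Sys V → Prop where
  | wfProc {Γ : ChanEnv V} (P : Proc V) : WF Γ (.proc P)
  | wfActive {Γ : ChanEnv V} {c : Chan} (P : Proc V) : 0 < (Γ c).1 → WF Γ (.active c P)
  | wfPar {Γ : ChanEnv V} {W1 W2 : Sys V} : WF Γ W1 → WF Γ W2 → WF Γ (.par W1 W2)
  | wfRes {Γ : ChanEnv V} {c : Chan} {n : ℕ} {v : V} {W : Sys V} :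
      WF (updEnv Γ c (n, v)) W → WF Γ (.res c n v W)

/-- Comparison of channel environments: Γ ≤ Γ'. -/
def EnvLE (Γ Γ' : ChanEnv V) : Prop := ∀ c : Chan, (Γ c).1 ≤ (Γ' c).1

/-!
A closed station whose recursion variables are guarded can always move: it lets time pass,
performs τ, or broadcasts. This goes by induction on the number of unguarded sums and
recursions, which unfolding a guarded `fix` leaves unchanged. Every proper system is
input-enabled (a receiver listening on an idle channel accepts, anything else ignores the
message by (RcvIgn)), so a broadcast of one parallel component synchronises with the others,
and a broadcast on a restricted channel becomes τ. An active receiver can always wait because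
well-formedness makes its channel exposed. Hence a configuration without instantaneous
reductions makes a timed one.
-/

theorem Exp.exists_eval_of_closedUnder_zero {e : Exp V} (h : e.closedUnder 0 = true) :
    ∃ v, e.eval = some v := by
  cases e with
  | val v => exact ⟨v, rfl⟩
  | var i => simp [Exp.closedUnder] at h

theorem Exp.closedUnder_mono {e : Exp V} {d d' : ℕ} (hd : d ≤ d')
    (h : e.closedUnder d = true) : e.closedUnder d' = true := by
  cases e <;> simp_all [Exp.closedUnder]; omega

theorem BExp.closedUnder_mono {b : BExp V} {d d' : ℕ} (hd : d ≤ d')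
    (h : b.closedUnder d = true) : b.closedUnder d' = true := by
  cases b <;> simp_all [BExp.closedUnder, Exp.closedUnder_mono hd]

theorem Proc.closedUnder_mono {P : Proc V} {dk pk dk' pk' : ℕ} (hd : dk ≤ dk') (hp : pk ≤ pk')
    (h : P.closedUnder dk pk = true) : P.closedUnder dk' pk' = true := by
  induction P generalizing dk pk dk' pk' <;>
    simp only [Proc.closedUnder, Bool.and_eq_true, decide_eq_true_eq] at h ⊢
  case broadcast ih => exact ⟨Exp.closedUnder_mono hd h.1, ih hd hp h.2⟩
  case rcv ihP ihQ => exact ⟨ihP (by omega) hp h.1, ihQ hd hp h.2⟩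
  case sigma ih => exact ih hd hp h
  case tau ih => exact ih hd hp h
  case sum ihP ihQ => exact ⟨ihP hd hp h.1, ihQ hd hp h.2⟩
  case mtch ihP ihQ => exact ⟨⟨BExp.closedUnder_mono hd h.1.1, ihP hd hp h.1.2⟩, ihQ hd hp h.2⟩
  case pvar => omega
  case fix ih => exact ih hd (by omega) h

theorem Exp.liftD_eq_self {e : Exp V} {dk k : ℕ} (h : e.closedUnder dk = true) (hk : dk ≤ k) :
    e.liftD k = e := by
  cases e <;> simp_all [Exp.closedUnder, Exp.liftD]; omega

theorem BExp.liftD_eq_self {b : BExp V} {dk k : ℕ} (h : b.closedUnder dk = true) (hk : dk ≤ k) :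
    b.liftD k = b := by
  cases b <;> simp_all [BExp.closedUnder, BExp.liftD, Exp.liftD_eq_self _ hk]

theorem Proc.liftD_eq_self {P : Proc V} {dk pk k : ℕ} (h : P.closedUnder dk pk = true)
    (hk : dk ≤ k) : P.liftD k = P := by
  induction P generalizing dk pk k <;>
    simp only [Proc.closedUnder, Bool.and_eq_true] at h <;> simp only [Proc.liftD]
  case broadcast ih => rw [Exp.liftD_eq_self h.1 hk, ih h.2 hk]
  case rcv ihP ihQ => rw [ihP h.1 (by omega), ihQ h.2 hk]
  case sigma ih => rw [ih h hk]
  case tau ih => rw [ih h hk]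
  case sum ihP ihQ => rw [ihP h.1 hk, ihQ h.2 hk]
  case mtch ihP ihQ => rw [BExp.liftD_eq_self h.1.1 hk, ihP h.1.2 hk, ihQ h.2 hk]
  case fix ih => rw [ih h hk]

theorem Proc.liftP_eq_self {P : Proc V} {dk pk k : ℕ} (h : P.closedUnder dk pk = true)
    (hk : pk ≤ k) : P.liftP k = P := by
  induction P generalizing dk pk k <;>
    simp only [Proc.closedUnder, Bool.and_eq_true, decide_eq_true_eq] at h <;>
    simp only [Proc.liftP]
  case broadcast ih => rw [ih h.2 hk]
  case rcv ihP ihQ => rw [ihP h.1 hk, ihQ h.2 hk]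
  case sigma ih => rw [ih h hk]
  case tau ih => rw [ih h hk]
  case sum ihP ihQ => rw [ihP h.1 hk, ihQ h.2 hk]
  case mtch ihP ihQ => rw [ihP h.1.2 hk, ihQ h.2 hk]
  case pvar => rw [if_pos (by omega)]
  case fix ih => rw [ih h (by omega)]

theorem Proc.guardedVar_of_closedUnder {P : Proc V} {dk pk k : ℕ}
    (h : P.closedUnder dk pk = true) (hk : pk ≤ k) : P.guardedVar k = true := by
  induction P generalizing pk k <;>
    simp only [Proc.closedUnder, Bool.and_eq_true, decide_eq_true_eq] at h <;>
    simp only [Proc.guardedVar, Bool.and_eq_true, bne_iff_ne]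
  case tau ih => exact ih h hk
  case sum ihP ihQ => exact ⟨ihP h.1 hk, ihQ h.2 hk⟩
  case pvar => omega
  case fix ih => exact ih h (by omega)

section Unfolding

variable {S : Proc V}

theorem Proc.hasRcv_substP {P : Proc V} {j : ℕ} {c : Chan} (h : P.hasRcv c = true) :
    (P.substP j S).hasRcv c = true := by
  induction P generalizing j S <;> simp only [Proc.hasRcv, Bool.or_eq_true, Bool.false_eq_true] at h
  case rcv => exact h
  case sum ihP ihQ => exact Bool.or_eq_true_iff.mpr (h.imp ihP ihQ)
  case fix ih => exact ih h

theorem Proc.closedUnder_substP (hS : S.closedUnder 0 0 = true) {P : Proc V} {dk j : ℕ}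
    (h : P.closedUnder dk (j + 1) = true) : (P.substP j S).closedUnder dk j = true := by
  induction P generalizing dk j <;>
    simp only [Proc.closedUnder, Bool.and_eq_true, decide_eq_true_eq] at h <;>
    simp only [Proc.substP, Proc.closedUnder, Bool.and_eq_true]
  case broadcast ih => exact ⟨h.1, ih h.2⟩
  case rcv ihP ihQ => rw [Proc.liftD_eq_self hS (Nat.zero_le 0)]; exact ⟨ihP h.1, ihQ h.2⟩
  case sigma ih => exact ih h
  case tau ih => exact ih h
  case sum ihP ihQ => exact ⟨ihP h.1, ihQ h.2⟩
  case mtch ihP ihQ => exact ⟨⟨h.1.1, ihP h.1.2⟩, ihQ h.2⟩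
  case pvar X =>
    split_ifs
    · exact Proc.closedUnder_mono (Nat.zero_le _) (Nat.zero_le _) hS
    all_goals simp only [Proc.closedUnder, decide_eq_true_eq]; omega
  case fix ih => rw [Proc.liftP_eq_self hS le_rfl]; exact ih h

theorem Proc.guardedVar_substP (hS : S.closedUnder 0 0 = true) {P : Proc V} {j k : ℕ}
    (hk : k < j) (h : P.guardedVar k = true) : (P.substP j S).guardedVar k = true := by
  induction P generalizing j k <;>
    simp only [Proc.guardedVar, Bool.and_eq_true, bne_iff_ne] at h <;>
    simp only [Proc.substP, Proc.guardedVar, Bool.and_eq_true]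
  case tau ih => exact ih hk h
  case sum ihP ihQ => exact ⟨ihP hk h.1, ihQ hk h.2⟩
  case pvar X =>
    split_ifs
    · exact Proc.guardedVar_of_closedUnder hS (Nat.zero_le _)
    all_goals simp only [Proc.guardedVar, bne_iff_ne]; omega
  case fix ih => rw [Proc.liftP_eq_self hS le_rfl]; exact ih (by omega) h

theorem Proc.wfRec_substP (hS : S.closedUnder 0 0 = true) (hSw : S.wfRec = true) {P : Proc V}
    {j : ℕ} (h : P.wfRec = true) : (P.substP j S).wfRec = true := by
  induction P generalizing j <;>
    simp only [Proc.wfRec, Bool.and_eq_true] at h <;>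
    simp only [Proc.substP, Proc.wfRec, Bool.and_eq_true]
  case broadcast ih => exact ih h
  case rcv ihP ihQ => rw [Proc.liftD_eq_self hS (Nat.zero_le 0)]; exact ⟨ihP h.1, ihQ h.2⟩
  case sigma ih => exact ih h
  case tau ih => exact ih h
  case sum ihP ihQ => exact ⟨ihP h.1, ihQ h.2⟩
  case mtch ihP ihQ => exact ⟨ihP h.1, ihQ h.2⟩
  case pvar => split_ifs <;> simp [hSw, Proc.wfRec]
  case fix ih =>
    rw [Proc.liftP_eq_self hS le_rfl]
    exact ⟨ih h.1, Proc.guardedVar_substP hS (Nat.succ_pos _) h.2⟩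

end Unfolding

/-- Unfolding a guarded `fix` does not change this measure (`unguardedSize_substP`), so it
bounds the number of unfoldings needed to reach a guarded prefix. -/
def Proc.unguardedSize : Proc V → ℕ
  | .sum P Q => P.unguardedSize + Q.unguardedSize + 1
  | .fix P => P.unguardedSize + 1
  | _ => 0

theorem Proc.unguardedSize_substP {P S : Proc V} {j : ℕ} (h : P.guardedVar j = true) :
    (P.substP j S).unguardedSize = P.unguardedSize := by
  induction P generalizing j S <;>
    simp only [Proc.guardedVar, Bool.and_eq_true, bne_iff_ne] at h <;>
    simp only [Proc.substP, Proc.unguardedSize]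
  case sum ihP ihQ => rw [ihP h.1, ihQ h.2]
  case pvar => rw [if_neg h]; split_ifs <;> rfl
  case fix ih => rw [ih h]

def Proc.proper (P : Proc V) : Prop :=
  P.closedUnder 0 0 = true ∧ P.wfRec = true

theorem Proc.proper.substP_fix {P : Proc V} (h : (Proc.fix P).proper) :
    (P.substP 0 (.fix P)).proper :=
  ⟨Proc.closedUnder_substP h.1 h.1, Proc.wfRec_substP h.1 h.2 ((Bool.and_eq_true _ _).mp h.2).1⟩

@[elab_as_elim]
theorem Proc.proper_induction {motive : Proc V → Prop}
    (sum : ∀ P Q, motive P → motive Q → motive (.sum P Q))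
    (fix : ∀ P, motive (P.substP 0 (.fix P)) → motive (.fix P))
    (guarded : ∀ P, P.proper → P.unguardedSize = 0 → motive P)
    (P : Proc V) (hP : P.proper) : motive P := by
  induction hn : P.unguardedSize using Nat.strong_induction_on generalizing P with
  | _ n ih =>
  cases P with
  | sum P Q =>
    obtain ⟨hc, hw⟩ := hP
    simp only [Proc.closedUnder, Proc.wfRec, Bool.and_eq_true] at hc hw
    simp only [Proc.unguardedSize] at hn
    exact sum P Q (ih _ (by omega) P ⟨hc.1, hw.1⟩ rfl) (ih _ (by omega) Q ⟨hc.2, hw.2⟩ rfl)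
  | fix P =>
    have hg : P.guardedVar 0 = true := ((Bool.and_eq_true _ _).mp hP.2).2
    simp only [Proc.unguardedSize] at hn
    exact fix P (ih _ (by rw [← hn, Proc.unguardedSize_substP hg]; omega) _ hP.substP_fix rfl)
  | _ => exact guarded _ hP (by simp [Proc.unguardedSize])

/-- The labels of instantaneous reductions, and of the steps that rule (Sum) lets through. -/
def Label.IsInstant (lam : Label V) : Prop :=
  lam = .tau ∨ ∃ c v, lam = .out c v

section Steps

variable (errv : V) (δ : V → ℕ) (Γ : ChanEnv V)

theorem BEval.exists_of_closedUnder_zero {b : BExp V} (h : b.closedUnder 0 = true) :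
    ∃ bv, BEval Γ b bv := by
  cases b with
  | beq e1 e2 =>
    simp only [BExp.closedUnder, Bool.and_eq_true] at h
    obtain ⟨v1, h1⟩ := Exp.exists_eval_of_closedUnder_zero h.1
    obtain ⟨v2, h2⟩ := Exp.exists_eval_of_closedUnder_zero h.2
    by_cases hv : v1 = v2
    · exact ⟨true, .beqT h1 (hv ▸ h2)⟩
    · exact ⟨false, .beqF h1 h2 hv⟩
  | exposed c =>
    rcases Nat.eq_zero_or_pos (Γ c).1 with h0 | h0
    · exact ⟨false, .expF h0⟩
    · exact ⟨true, .expT h0⟩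

theorem Proc.exists_step {P : Proc V} (hP : P.proper) :
    (∃ P', Step errv δ Γ (.proc P) .sigma (.proc P')) ∨
      ∃ lam W, lam.IsInstant ∧ Step errv δ Γ (.proc P) lam W := by
  refine Proc.proper_induction (fun P Q ihP ihQ => ?_) (fun P ih => ?_) (fun P hP h0 => ?_) P hP
  · rcases ihP with ⟨P', hP'⟩ | ⟨lam, W, hl, hW⟩
    · rcases ihQ with ⟨Q', hQ'⟩ | ⟨lam, W, hl, hW⟩
      · exact .inl ⟨_, .sumTime hP' hQ'⟩
      · exact .inr ⟨lam, W, hl, .sumR hW hl⟩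
    · exact .inr ⟨lam, W, hl, .sumL hW hl⟩
  · rcases ih with ⟨P', h'⟩ | ⟨lam, W, hl, hW⟩
    · exact .inl ⟨P', .recS h'⟩
    · exact .inr ⟨lam, W, hl, .recS hW⟩
  · cases P with
    | broadcast c e P =>
      simp only [Proc.proper, Proc.closedUnder, Bool.and_eq_true] at hP
      obtain ⟨v, hv⟩ := Exp.exists_eval_of_closedUnder_zero hP.1.1
      exact .inr ⟨_, _, .inr ⟨c, v, rfl⟩, .snd hv⟩
    | rcv c P Q =>
      rcases Nat.eq_zero_or_pos (Γ c).1 with h0 | h0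
      · exact .inl ⟨Q, .timeout h0⟩
      · exact .inr ⟨_, _, .inl rfl, .rcvLate h0⟩
    | sigma P => exact .inl ⟨P, .sleep⟩
    | tau P => exact .inr ⟨_, _, .inl rfl, .tauStep⟩
    | mtch b P Q =>
      simp only [Proc.proper, Proc.closedUnder, Bool.and_eq_true] at hP
      obtain ⟨bv, hb⟩ := BEval.exists_of_closedUnder_zero Γ hP.1.1.1
      cases bv
      · exact .inr ⟨_, _, .inl rfl, .elseB hb⟩
      · exact .inr ⟨_, _, .inl rfl, .thenB hb⟩
    | pvar X => simp [Proc.proper, Proc.closedUnder] at hP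
    | nil => exact .inl ⟨_, .timeNil⟩
    | sum | fix => simp [Proc.unguardedSize] at h0

theorem Proc.exists_inp_step {P : Proc V} (hP : P.proper) {c : Chan} (v : V)
    (hr : P.hasRcv c = true) (hc : (Γ c).1 = 0) :
    ∃ W, Step errv δ Γ (.proc P) (.inp c v) W := by
  revert hr
  refine Proc.proper_induction (fun P Q ihP ihQ => ?_) (fun P ih => ?_) (fun P hP h0 => ?_) P hP
  · intro hr
    rcases Bool.or_eq_true_iff.mp hr with hr | hr
    · obtain ⟨W, hW⟩ := ihP hr
      exact ⟨W, .sumRcvL hW ⟨hc, hr⟩⟩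
    · obtain ⟨W, hW⟩ := ihQ hr
      exact ⟨W, .sumRcvR hW ⟨hc, hr⟩⟩
  · intro hr
    obtain ⟨W, hW⟩ := ih (Proc.hasRcv_substP hr)
    exact ⟨W, .recS hW⟩
  · intro hr
    cases P <;> simp only [Proc.hasRcv, Bool.false_eq_true, beq_iff_eq] at hr
    case rcv d P Q => subst hr; exact ⟨_, .rcv hc⟩
    all_goals simp [Proc.unguardedSize] at h0

theorem Sys.exists_inp_step {W : Sys V} (hW : W.proper) (c : Chan) (v : V) :
    ∃ W', Step errv δ Γ W (.inp c v) W' := by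
  induction W generalizing Γ with
  | proc P =>
    by_cases hI : Isrcv Γ (.proc P) c
    · exact Proc.exists_inp_step errv δ Γ hW v hI.2 hI.1
    · exact ⟨_, .rcvIgn hI⟩
  | active d P => exact ⟨_, .rcvIgn (by simp [Isrcv, Sys.hasRcv])⟩
  | par W1 W2 ih1 ih2 =>
    obtain ⟨hc, hw⟩ := hW
    simp only [Sys.closedUnder, Sys.wfRec, Bool.and_eq_true] at hc hw
    obtain ⟨W1', h1⟩ := ih1 Γ ⟨hc.1, hw.1⟩
    obtain ⟨W2', h2⟩ := ih2 Γ ⟨hc.2, hw.2⟩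
    exact ⟨_, .rcvPar h1 h2⟩
  | res d n w W ih =>
    by_cases hd : d = c
    · exact ⟨_, .rcvIgn (by simp [Isrcv, Sys.hasRcv, hd])⟩
    · obtain ⟨W', h⟩ := ih (updEnv Γ d (n, w)) hW
      exact ⟨_, .resV h (Ne.symm hd) nofun⟩

variable {errv δ Γ}

theorem Step.exists_par_left_of_isInstant {lam : Label V} {W1 W1' : Sys V} (hl : lam.IsInstant)
    (h1 : Step errv δ Γ W1 lam W1') {W2 : Sys V} (hW2 : W2.proper) :
    ∃ W', Step errv δ Γ (.par W1 W2) lam W' := by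
  rcases hl with rfl | ⟨c, v, rfl⟩
  · exact ⟨_, .tauParL h1⟩
  · obtain ⟨W2', h2⟩ := Sys.exists_inp_step errv δ Γ hW2 c v
    exact ⟨_, .sync h1 h2⟩

theorem Step.exists_par_right_of_isInstant {lam : Label V} {W2 W2' : Sys V} (hl : lam.IsInstant)
    (h2 : Step errv δ Γ W2 lam W2') {W1 : Sys V} (hW1 : W1.proper) :
    ∃ W', Step errv δ Γ (.par W1 W2) lam W' := by
  rcases hl with rfl | ⟨c, v, rfl⟩
  · exact ⟨_, .tauParR h2⟩
  · obtain ⟨W1', h1⟩ := Sys.exists_inp_step errv δ Γ hW1 c v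
    exact ⟨_, .syncR h1 h2⟩

theorem Step.exists_res_of_isInstant {c : Chan} {n : ℕ} {v : V} {lam : Label V} {W W' : Sys V}
    (hl : lam.IsInstant) (h : Step errv δ (updEnv Γ c (n, v)) W lam W') :
    ∃ lam' W'', lam'.IsInstant ∧ Step errv δ Γ (.res c n v W) lam' W'' := by
  rcases hl with rfl | ⟨d, w, rfl⟩
  · exact ⟨_, _, .inl rfl, .resV h id nofun⟩
  · by_cases hd : d = c
    · subst hd
      exact ⟨_, _, .inl rfl, .resI h⟩
    · exact ⟨_, _, .inr ⟨d, w, rfl⟩, .resV h hd nofun⟩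

theorem Sys.exists_step {W : Sys V} (hwf : WF Γ W) (hW : W.proper) :
    (∃ W', Step errv δ Γ W .sigma W') ∨
      ∃ lam W', lam.IsInstant ∧ Step errv δ Γ W lam W' := by
  induction hwf with
  | wfProc P =>
    rcases Proc.exists_step errv δ _ hW with ⟨P', h⟩ | h
    · exact .inl ⟨_, h⟩
    · exact .inr h
  | wfActive P hpos =>
    rcases (Nat.succ_le_of_lt hpos).eq_or_lt with h1 | h1
    · exact .inl ⟨_, .endRcv h1.symm rfl⟩
    · exact .inl ⟨_, .actRcv h1⟩
  | wfPar _ _ ih1 ih2 =>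
    obtain ⟨hc, hw⟩ := hW
    simp only [Sys.closedUnder, Sys.wfRec, Bool.and_eq_true] at hc hw
    have hW1 : Sys.proper _ := ⟨hc.1, hw.1⟩
    have hW2 : Sys.proper _ := ⟨hc.2, hw.2⟩
    rcases ih1 hW1 with ⟨W1', h1⟩ | ⟨lam, W1', hl, h1⟩
    · rcases ih2 hW2 with ⟨W2', h2⟩ | ⟨lam, W2', hl, h2⟩
      · exact .inl ⟨_, .timePar h1 h2⟩
      · obtain ⟨W', h⟩ := h2.exists_par_right_of_isInstant hl hW1
        exact .inr ⟨lam, W', hl, h⟩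
    · obtain ⟨W', h⟩ := h1.exists_par_left_of_isInstant hl hW2
      exact .inr ⟨lam, W', hl, h⟩
  | wfRes _ ih =>
    rcases ih hW with ⟨W', h⟩ | ⟨lam, W', hl, h⟩
    · exact .inl ⟨_, .resT h⟩
    · exact .inr (h.exists_res_of_isInstant hl)

end Steps

theorem exists_redI_of_isInstant {errv : V} {δ : V → ℕ} {Γ : ChanEnv V} {lam : Label V}
    {W W' : Sys V} (hl : lam.IsInstant) (h : Step errv δ Γ W lam W') :
    ∃ C', RedI errv δ (Γ, W) C' := by
  rcases hl with rfl | ⟨c, v, rfl⟩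
  · exact ⟨(Γ, W'), .inl ⟨h, rfl⟩⟩
  · exact ⟨(updBcast errv δ Γ c v, W'), .inr ⟨c, v, h, rfl⟩⟩

theorem patience_general {V : Type} (errv : V) (δ : V → ℕ)
    (C : Config V) (hp : C.2.proper) (hwf : WF C.1 C.2)
    (h : ¬ ∃ C' : Config V, RedI errv δ C C') :
    ∃ C'' : Config V, RedT errv δ C C'' := by
  rcases Sys.exists_step hwf hp with ⟨W', hσ⟩ | ⟨lam, W', hl, hstep⟩
  · exact ⟨(updL errv δ .sigma C.1, W'), hσ, rfl⟩
  · exact absurd (exists_redI_of_isInstant hl hstep) h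

/-- Patience (Proposition 4.9 of the paper). -/
theorem patience {V : Type} (errv : V) (δ : V → ℕ) (hδ : ∀ v : V, 1 ≤ δ v)
    (C : Config V) (hp : C.2.proper) (hwf : WF C.1 C.2)
    (h : ¬ ∃ C' : Config V, RedI errv δ C C') :
    ∃ C'' : Config V, RedT errv δ C C'' :=
  patience_general errv δ C hp hwf h

end CCCP
end

section
/- Every CCCP configuration Γ ▷ W is well-timed: there exists k ∈ ℕ such that whenever Γ ▷ W performs h consecutive instantaneous reductions, then h ≤ k. (This relies on the syntactic constraint that every occurrence of a recursion variable in fix X.P is guarded by a time-consuming construct.) -/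
/- A formalization of the Calculus of Collision-prone Communicating Processes (CCCP). -/

namespace CCCP

variable {V : Type}

/-!
Assign to each term its `instantDepth`: a broadcast, a receiver or a matching counts one step,
`σ` counts none, `τ` adds one to its continuation, a choice takes the maximum and parallel
components add up. A `τ` or broadcast step strictly lowers this depth and an input step does not
raise it; for a broadcast this uses `δ v ≥ 1`, which puts the continuation behind a `σ`.
Unfolding `fix X.P` leaves the depth unchanged because `X` occurs only under prefixes whose depth
ignores their continuation; this guardedness survives unfolding since recursion bodies are
closed. Hence the depth of `W` bounds every sequence of instantaneous reductions.
-/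

theorem relPow_le_of_measure_lt {α : Type*} {r : α → α → Prop} {p : α → Prop} (f : α → ℕ)
    (hp : ∀ a b, r a b → p a → p b) (hf : ∀ a b, r a b → p a → f b < f a) :
    ∀ {n : ℕ} {a b : α}, relPow r n a b → p a → n ≤ f a
  | 0, _, _, _, _ => Nat.zero_le _
  | _ + 1, a, _, ⟨a', hr, hn⟩, ha =>
    (relPow_le_of_measure_lt f hp hf hn (hp a a' hr ha)).trans_lt (hf a a' hr ha)

def Proc.pvarsBelow : Proc V → ℕ → Bool
  | .broadcast _ _ P, k => P.pvarsBelow k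
  | .rcv _ P Q, k => P.pvarsBelow k && Q.pvarsBelow k
  | .sigma P, k => P.pvarsBelow k
  | .tau P, k => P.pvarsBelow k
  | .sum P Q, k => P.pvarsBelow k && Q.pvarsBelow k
  | .mtch _ P Q, k => P.pvarsBelow k && Q.pvarsBelow k
  | .pvar X, k => decide (X < k)
  | .nil, _ => true
  | .fix P, k => P.pvarsBelow (k + 1)

def Sys.pvarsClosed : Sys V → Bool
  | .proc P => P.pvarsBelow 0
  | .active _ P => P.pvarsBelow 0
  | .par W1 W2 => W1.pvarsClosed && W2.pvarsClosed
  | .res _ _ _ W => W.pvarsClosed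

/-- The recursion half of `Sys.proper`, which is all that the step invariant needs. -/
def Sys.RecProper (W : Sys V) : Prop :=
  W.pvarsClosed = true ∧ W.wfRec = true

def Proc.instantDepth : Proc V → ℕ
  | .broadcast _ _ _ => 1
  | .rcv _ _ _ => 1
  | .sigma _ => 0
  | .tau P => P.instantDepth + 1
  | .sum P Q => max P.instantDepth Q.instantDepth
  | .mtch _ _ _ => 1
  | .pvar _ => 0
  | .nil => 0
  | .fix P => P.instantDepth

def Sys.instantDepth : Sys V → ℕ
  | .proc P => P.instantDepth
  | .active _ _ => 0
  | .par W1 W2 => W1.instantDepth + W2.instantDepth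
  | .res _ _ _ W => W.instantDepth

namespace Proc

theorem pvarsBelow_of_closedUnder {P : Proc V} {dk pk : ℕ} (h : P.closedUnder dk pk = true) :
    P.pvarsBelow pk = true := by
  induction P generalizing dk pk <;> grind [closedUnder, pvarsBelow]

theorem pvarsBelow_mono {P : Proc V} {k k' : ℕ} (h : P.pvarsBelow k = true) (hk : k ≤ k') :
    P.pvarsBelow k' = true := by
  induction P generalizing k k' with
  | fix P ih => exact ih h (by omega)
  | _ => grind [pvarsBelow]

@[simp]
theorem pvarsBelow_liftD {P : Proc V} {k j : ℕ} : (P.liftD k).pvarsBelow j = P.pvarsBelow j := by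
  induction P generalizing k j <;> simp_all [liftD, pvarsBelow]

@[simp]
theorem pvarsBelow_substD {P : Proc V} {j k : ℕ} {v : V} :
    (P.substD j v).pvarsBelow k = P.pvarsBelow k := by
  induction P generalizing j k <;> simp_all [substD, pvarsBelow]

@[simp]
theorem guardedVar_liftD {P : Proc V} {k j : ℕ} :
    (P.liftD k).guardedVar j = P.guardedVar j := by
  induction P generalizing k j <;> simp_all [liftD, guardedVar]

@[simp]
theorem guardedVar_substD {P : Proc V} {j k : ℕ} {v : V} :
    (P.substD j v).guardedVar k = P.guardedVar k := by
  induction P generalizing j k <;> simp_all [substD, guardedVar]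

@[simp]
theorem wfRec_liftD {P : Proc V} {k : ℕ} : (P.liftD k).wfRec = P.wfRec := by
  induction P generalizing k <;> simp_all [liftD, wfRec]

@[simp]
theorem wfRec_substD {P : Proc V} {j : ℕ} {v : V} : (P.substD j v).wfRec = P.wfRec := by
  induction P generalizing j <;> simp_all [substD, wfRec]

@[simp]
theorem pvarsBelow_sigmaIter {n k : ℕ} {P : Proc V} :
    (sigmaIter n P).pvarsBelow k = P.pvarsBelow k := by
  induction n <;> simp_all [sigmaIter, pvarsBelow]

@[simp]
theorem wfRec_sigmaIter {n : ℕ} {P : Proc V} : (sigmaIter n P).wfRec = P.wfRec := by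
  induction n <;> simp_all [sigmaIter, wfRec]

theorem liftP_eq_self_of_pvarsBelow {P : Proc V} {j k : ℕ} (h : P.pvarsBelow j = true)
    (hk : j ≤ k) : P.liftP k = P := by
  induction P generalizing j k with
  | fix P ih => simp only [liftP, ih h (Nat.succ_le_succ hk)]
  | _ => grind [pvarsBelow, liftP]

theorem guardedVar_of_pvarsBelow {P : Proc V} {j k : ℕ} (h : P.pvarsBelow j = true)
    (hk : j ≤ k) : P.guardedVar k = true := by
  induction P generalizing j k with
  | fix P ih => exact ih h (Nat.succ_le_succ hk)
  | _ => grind [pvarsBelow, guardedVar]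

theorem pvarsBelow_substP {P S : Proc V} {j : ℕ} (hP : P.pvarsBelow (j + 1) = true)
    (hS : S.pvarsBelow 0 = true) : (P.substP j S).pvarsBelow j = true := by
  induction P generalizing j S with
  | pvar X =>
    simp only [pvarsBelow, decide_eq_true_eq] at hP
    by_cases hX : X = j
    · simp [substP, hX, pvarsBelow_mono hS (Nat.zero_le j)]
    · simp [substP, hX, show ¬j < X by omega, pvarsBelow]; omega
  | fix P ih =>
    simp only [substP, pvarsBelow, liftP_eq_self_of_pvarsBelow hS le_rfl] at hP ⊢
    exact ih hP hS
  | _ => simp_all [substP, pvarsBelow]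

theorem guardedVar_substP_s13 {P S : Proc V} {j k : ℕ} (hg : P.guardedVar k = true)
    (hP : P.pvarsBelow (j + 1) = true) (hS : S.pvarsBelow 0 = true) (hjk : j ≠ k) :
    (P.substP j S).guardedVar k = true := by
  induction P generalizing j k S with
  | pvar X =>
    simp only [pvarsBelow, decide_eq_true_eq] at hP
    by_cases hX : X = j
    · simp [substP, hX, guardedVar_of_pvarsBelow hS (Nat.zero_le k)]
    · simp_all [substP, show ¬j < X by omega, guardedVar]
  | fix P ih =>
    simp only [substP, guardedVar, pvarsBelow, liftP_eq_self_of_pvarsBelow hS le_rfl] at hg hP ⊢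
    exact ih hg hP hS (by omega)
  | _ => simp_all [substP, guardedVar, pvarsBelow]

theorem wfRec_substP_s13 {P S : Proc V} {j : ℕ} (hw : P.wfRec = true) (hwS : S.wfRec = true)
    (hP : P.pvarsBelow (j + 1) = true) (hS : S.pvarsBelow 0 = true) :
    (P.substP j S).wfRec = true := by
  induction P generalizing j S with
  | pvar X => simp only [substP]; split_ifs <;> simp_all [wfRec]
  | fix P ih =>
    simp only [substP, wfRec, pvarsBelow, liftP_eq_self_of_pvarsBelow hS le_rfl,
      Bool.and_eq_true] at hw hP ⊢
    exact ⟨ih hw.1 hwS hP hS, guardedVar_substP_s13 hw.2 hP hS (by omega)⟩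
  | _ => simp_all [substP, wfRec, pvarsBelow]

theorem instantDepth_substP {P S : Proc V} {j : ℕ} (hg : P.guardedVar j = true) :
    (P.substP j S).instantDepth = P.instantDepth := by
  induction P generalizing j S with
  | pvar X => simp_all [guardedVar, substP]; split_ifs <;> rfl
  | _ => simp_all [guardedVar, substP, instantDepth]

theorem instantDepth_sigmaIter {n : ℕ} {P : Proc V} (hn : 1 ≤ n) :
    (sigmaIter n P).instantDepth = 0 := by
  obtain ⟨n, rfl⟩ := Nat.exists_eq_add_of_le' hn
  rfl

theorem recProper_unfold {P : Proc V} (h : (Sys.proc (.fix P)).RecProper) :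
    (Sys.proc (P.substP 0 (.fix P))).RecProper := by
  obtain ⟨hP, hw⟩ := h
  simp only [Sys.pvarsClosed, Sys.wfRec, pvarsBelow, wfRec, Bool.and_eq_true] at hP hw
  exact ⟨pvarsBelow_substP hP hP, wfRec_substP_s13 hw.1 (by simp [wfRec, hw]) hP hP⟩

theorem instantDepth_unfold {P : Proc V} (h : (fix P).wfRec = true) :
    (P.substP 0 (.fix P)).instantDepth = (fix P).instantDepth := by
  simp only [wfRec, Bool.and_eq_true] at h
  exact instantDepth_substP h.2

end Proc

namespace Sys

theorem pvarsClosed_of_closedUnder {W : Sys V} {dk : ℕ} (h : W.closedUnder dk 0 = true) :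
    W.pvarsClosed = true := by
  induction W generalizing dk with
  | proc P | active c P => exact Proc.pvarsBelow_of_closedUnder h
  | par W1 W2 ih1 ih2 =>
    simp only [closedUnder, pvarsClosed, Bool.and_eq_true] at h ⊢
    exact ⟨ih1 h.1, ih2 h.2⟩
  | res c n v W ih => exact ih h

theorem proper.recProper {W : Sys V} (h : W.proper) : W.RecProper :=
  ⟨pvarsClosed_of_closedUnder h.1, h.2⟩

@[simp]
theorem recProper_par {W1 W2 : Sys V} : (par W1 W2).RecProper ↔ W1.RecProper ∧ W2.RecProper := by
  simp only [RecProper, pvarsClosed, wfRec, Bool.and_eq_true]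
  tauto

@[simp]
theorem recProper_sum {P Q : Proc V} :
    (proc (.sum P Q)).RecProper ↔ (proc P).RecProper ∧ (proc Q).RecProper := by
  simp only [RecProper, pvarsClosed, wfRec, Proc.pvarsBelow, Proc.wfRec, Bool.and_eq_true]
  tauto

end Sys

section Step

variable {errv : V} {δ : V → ℕ} {Γ : ChanEnv V} {W W' : Sys V} {lam : Label V}

theorem Step.recProper (h : Step errv δ Γ W lam W') (hW : W.RecProper) : W'.RecProper := by
  induction h with
  | recS _ ih => exact ih (Proc.recProper_unfold hW)
  | _ => simp_all [Sys.RecProper, Sys.pvarsClosed, Sys.wfRec, Proc.pvarsBelow, Proc.wfRec]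

theorem Step.instantDepth_le_of_inp (h : Step errv δ Γ W lam W') (hlam : ∃ c v, lam = .inp c v)
    (hW : W.RecProper) : W'.instantDepth ≤ W.instantDepth := by
  induction h with
  | rcv _ => simp [Sys.instantDepth, Proc.instantDepth]
  | rcvIgn _ => exact le_rfl
  | rcvPar _ _ ih1 ih2 =>
    simp only [Sys.recProper_par] at hW
    exact Nat.add_le_add (ih1 hlam hW.1) (ih2 hlam hW.2)
  | recS _ ih =>
    simpa [Sys.instantDepth, Proc.instantDepth_unfold hW.2] using ih hlam (Proc.recProper_unfold hW)
  | sumRcvL _ _ ih =>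
    simp only [Sys.recProper_sum] at hW
    exact (ih hlam hW.1).trans (le_max_left _ _)
  | sumRcvR _ _ ih =>
    simp only [Sys.recProper_sum] at hW
    exact (ih hlam hW.2).trans (le_max_right _ _)
  | resV _ _ _ ih => exact ih hlam hW
  | sumL _ hlam' | sumR _ hlam' => grind
  | _ => simp at hlam

theorem Step.instantDepth_lt (hδ : ∀ v : V, 1 ≤ δ v) (h : Step errv δ Γ W lam W')
    (hlam : lam = .tau ∨ ∃ c v, lam = .out c v) (hW : W.RecProper) :
    W'.instantDepth < W.instantDepth := by
  induction h with
  | snd _ => simp [Sys.instantDepth, Proc.instantDepth, Proc.instantDepth_sigmaIter (hδ _)]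
  | sync h1 h2 ih1 _ =>
    simp only [Sys.recProper_par] at hW
    exact Nat.add_lt_add_of_lt_of_le (ih1 hlam hW.1) (h2.instantDepth_le_of_inp ⟨_, _, rfl⟩ hW.2)
  | syncR h1 h2 _ ih2 =>
    simp only [Sys.recProper_par] at hW
    exact Nat.add_lt_add_of_le_of_lt (h1.instantDepth_le_of_inp ⟨_, _, rfl⟩ hW.1) (ih2 hlam hW.2)
  | rcvLate _ | tauStep | thenB _ | elseB _ => simp [Sys.instantDepth, Proc.instantDepth]
  | tauParL _ ih =>
    simp only [Sys.recProper_par] at hW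
    exact Nat.add_lt_add_right (ih hlam hW.1) _
  | tauParR _ ih =>
    simp only [Sys.recProper_par] at hW
    exact Nat.add_lt_add_left (ih hlam hW.2) _
  | recS _ ih =>
    simpa [Sys.instantDepth, Proc.instantDepth_unfold hW.2] using ih hlam (Proc.recProper_unfold hW)
  | sumL _ hlam' ih =>
    simp only [Sys.recProper_sum] at hW
    exact (ih hlam' hW.1).trans_le (le_max_left _ _)
  | sumR _ hlam' ih =>
    simp only [Sys.recProper_sum] at hW
    exact (ih hlam' hW.2).trans_le (le_max_right _ _)
  | resI _ ih => exact ih (.inr ⟨_, _, rfl⟩) hW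
  | resV _ _ _ ih => exact ih hlam hW
  | _ => simp at hlam

end Step

section RedI

variable {errv : V} {δ : V → ℕ} {C C' : Config V}

theorem RedI.exists_step (h : RedI errv δ C C') :
    ∃ lam, (lam = .tau ∨ ∃ c v, lam = .out c v) ∧ Step errv δ C.1 C.2 lam C'.2 := by
  rcases h with ⟨h, -⟩ | ⟨c, v, h, -⟩
  · exact ⟨_, .inl rfl, h⟩
  · exact ⟨_, .inr ⟨c, v, rfl⟩, h⟩

theorem RedI.recProper (h : RedI errv δ C C') (hC : C.2.RecProper) : C'.2.RecProper := by
  obtain ⟨_, -, hs⟩ := h.exists_step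
  exact hs.recProper hC

theorem RedI.instantDepth_lt (hδ : ∀ v : V, 1 ≤ δ v) (h : RedI errv δ C C')
    (hC : C.2.RecProper) : C'.2.instantDepth < C.2.instantDepth := by
  obtain ⟨_, hlam, hs⟩ := h.exists_step
  exact hs.instantDepth_lt hδ hlam hC

end RedI

/-- Every CCCP configuration is well-timed (Proposition 4.12 of the paper).
The hypothesis `hp` incorporates the syntactic constraint that every occurrence of
a recursion variable is guarded by a time-consuming construct. -/
theorem well_timed {V : Type} (errv : V) (δ : V → ℕ) (hδ : ∀ v : V, 1 ≤ δ v)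
    (Γ : ChanEnv V) (W : Sys V) (hp : W.proper) :
    ∃ k : ℕ, ∀ (h : ℕ) (C' : Config V),
      relPow (RedI errv δ) h (Γ, W) C' → h ≤ k := by
  refine ⟨W.instantDepth, fun _ _ hred => ?_⟩
  exact relPow_le_of_measure_lt (fun C => C.2.instantDepth) (fun _ _ hr => hr.recProper)
    (fun _ _ hr => hr.instantDepth_lt hδ) hred hp.recProper

end CCCP
end
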